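/- Under the assumptions DᵢDⱼS = −gᵢⱼ and S = P − ½ψ² with P constant, the unit vector field υ^i = ψ^i/ψ (defined where ψ ≠ 0, ψ^i = g^{ij}ψⱼ, ψ = √(ψ^iψᵢ)) satisfies the geodesic equation υᵏDₖυ^i = 0, i.e., its integral curves are unit-speed geodesics. -/

import Mathlib

noncomputable section

def pd {n : ℕ} (f : (Fin n → ℝ) → ℝ) (i : Fin n) (x : Fin n → ℝ) : ℝ :=
  fderiv ℝ f x (Pi.single i 1)

def pd2 {n : ℕ} (f : (Fin n → ℝ) → ℝ) (i j : Fin n) (x : Fin n → ℝ) : ℝ :=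
  pd (pd f j) i x

def christoffel {n : ℕ} (g gInv : (Fin n → ℝ) → Fin n → Fin n → ℝ)
    (k i j : Fin n) (x : Fin n → ℝ) : ℝ :=
  (1 / 2) * ∑ m, gInv x k m *
    (pd (fun y => g y m j) i x + pd (fun y => g y m i) j x - pd (fun y => g y i j) m x)

variable {n : ℕ}

lemma pd_neg {f : (Fin n → ℝ) → ℝ} {i x} :
    pd (fun y => -f y) i x = -pd f i x := by
  unfold pd; rw [fderiv_fun_neg]; simp

lemma pd_sum {ι : Type*} (s : Finset ι) (f : ι → (Fin n → ℝ) → ℝ) {i x}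
    (h : ∀ j ∈ s, DifferentiableAt ℝ (f j) x) :
    pd (fun y => ∑ j ∈ s, f j y) i x = ∑ j ∈ s, pd (f j) i x := by
  unfold pd; rw [fderiv_fun_sum h]; simp

lemma pd_mul {f g : (Fin n → ℝ) → ℝ} {i x} (hf : DifferentiableAt ℝ f x)
    (hg : DifferentiableAt ℝ g x) :
    pd (fun y => f y * g y) i x = pd f i x * g x + f x * pd g i x := by
  unfold pd; rw [fderiv_fun_mul hf hg]; simp; ring

lemma pd_inv {g : (Fin n → ℝ) → ℝ} {i x} (hg : DifferentiableAt ℝ g x) (h0 : g x ≠ 0) :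
    pd (fun y => (g y)⁻¹) i x = -pd g i x / (g x)^2 := by
  unfold pd
  have h := (hasDerivAt_inv h0).comp_hasFDerivAt x hg.hasFDerivAt
  have h2 : HasFDerivAt (fun y => (g y)⁻¹) (-((g x) ^ 2)⁻¹ • fderiv ℝ g x) x := h
  rw [h2.fderiv]
  simp; ring

lemma pd_div {f g : (Fin n → ℝ) → ℝ} {i x} (hf : DifferentiableAt ℝ f x)
    (hg : DifferentiableAt ℝ g x) (h0 : g x ≠ 0) :
    pd (fun y => f y / g y) i x = (pd f i x * g x - f x * pd g i x) / (g x)^2 := by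
  have : (fun y => f y / g y) = fun y => f y * (g y)⁻¹ := by
    funext y; rw [div_eq_mul_inv]
  rw [this, pd_mul (g := fun y => (g y)⁻¹) hf (hg.inv h0), pd_inv hg h0]
  field_simp
  ring

lemma pd_sqrt {f : (Fin n → ℝ) → ℝ} {i x} (hf : DifferentiableAt ℝ f x)
    (h0 : 0 < f x) :
    pd (fun y => Real.sqrt (f y)) i x = pd f i x / (2 * Real.sqrt (f x)) := by
  unfold pd
  have h := (Real.hasDerivAt_sqrt (ne_of_gt h0)).comp_hasFDerivAt x hf.hasFDerivAt
  have h2 : HasFDerivAt (fun y => Real.sqrt (f y)) ((1 / (2 * Real.sqrt (f x))) • fderiv ℝ f x) x := h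
  rw [h2.fderiv]
  simp; ring

lemma pd_eventually_const {f : (Fin n → ℝ) → ℝ} {i x} {c : ℝ}
    (h : ∀ᶠ y in nhds x, f y = c) : pd f i x = 0 := by
  unfold pd
  rw [Filter.EventuallyEq.fderiv_eq (h.mono fun y hy => hy)]
  simp

lemma pd_congr_nhds {f f' : (Fin n → ℝ) → ℝ} {i x}
    (h : ∀ᶠ y in nhds x, f y = f' y) : pd f i x = pd f' i x := by
  unfold pd
  rw [Filter.EventuallyEq.fderiv_eq (h.mono fun y hy => hy)]

/-- If `DᵢDⱼS = −gᵢⱼ`, then on the open set where `ψ > 0` the unit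
vector field `υⁱ = ψⁱ/ψ` (with `ψᵢ = −∂ᵢS`, `ψⁱ = g^{ij}ψⱼ`, `ψ = √(ψⁱψᵢ)`) satisfies
the geodesic equation `υᵏ(∂ₖυⁱ + Γⁱₖₘυᵐ) = 0`: its integral curves are unit-speed
geodesics. -/
theorem gradient_unit_field_is_geodesic
    (n : ℕ) (U : Set (Fin n → ℝ)) (hU : IsOpen U)
    (g gInv : (Fin n → ℝ) → Fin n → Fin n → ℝ)
    (hgsym : ∀ I ∈ U, ∀ i j, g I i j = g I j i)
    (hgpos : ∀ I ∈ U, ∀ v : Fin n → ℝ, v ≠ 0 → 0 < ∑ i, ∑ j, g I i j * v i * v j)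
    (hgInv : ∀ I ∈ U, ∀ i k, ∑ j, g I i j * gInv I j k = if i = k then 1 else 0)
    (hgsmooth : ∀ i j, ContDiffOn ℝ (⊤ : ℕ∞) (fun I => g I i j) U)
    (hgInvsmooth : ∀ i j, ContDiffOn ℝ (⊤ : ℕ∞) (fun I => gInv I i j) U)
    (S : (Fin n → ℝ) → ℝ) (hS : ContDiffOn ℝ 3 S U)
    (hHess : ∀ p ∈ U, ∀ i j : Fin n,
      pd2 S i j p - ∑ k, christoffel g gInv k i j p * pd S k p = -g p i j)
    (ψlow : (Fin n → ℝ) → Fin n → ℝ) (hψlow : ∀ I i, ψlow I i = -pd S i I)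
    (ψup : (Fin n → ℝ) → Fin n → ℝ) (hψup : ∀ I i, ψup I i = ∑ j, gInv I i j * ψlow I j)
    (ψ : (Fin n → ℝ) → ℝ) (hψ : ∀ I, ψ I = Real.sqrt (∑ i, ψup I i * ψlow I i))
    (υ : (Fin n → ℝ) → Fin n → ℝ) (hυ : ∀ I i, υ I i = ψup I i / ψ I) :
    ∀ I ∈ U, 0 < ψ I → ∀ i : Fin n,
      ∑ k, υ I k * (pd (fun y => υ y i) k I +
        ∑ m, christoffel g gInv i k m I * υ I m) = 0 := by
  intro I hI hs i
  have hUI : U ∈ nhds I := hU.mem_nhds hI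
  -- differentiability of metric components
  have hdg : ∀ a b, DifferentiableAt ℝ (fun y => g y a b) I := fun a b =>
    ((hgsmooth a b).contDiffAt hUI).differentiableAt (by simp)
  have hdgi : ∀ a b, DifferentiableAt ℝ (fun y => gInv y a b) I := fun a b =>
    ((hgInvsmooth a b).contDiffAt hUI).differentiableAt (by simp)
  -- differentiability of pd S
  have hpdS : ∀ j, DifferentiableAt ℝ (fun y => pd S j y) I := by
    intro j
    have h1 : ContDiffOn ℝ 2 (fun y => fderiv ℝ S y) U :=
      hS.fderiv_of_isOpen hU (by norm_num)
    have h2 : ContDiffOn ℝ 2 (fun y => pd S j y) U := by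
      exact h1.clm_apply contDiffOn_const
    exact (h2.contDiffAt hUI).differentiableAt (by norm_num)
  have hψlow_eq : ∀ j, (fun y => ψlow y j) = (fun y => -(pd S j y)) := by
    intro j; funext y; rw [hψlow]
  have hψlowd : ∀ j, DifferentiableAt ℝ (fun y => ψlow y j) I := by
    intro j; rw [hψlow_eq j]; exact (hpdS j).neg
  -- covariant derivative of ψlow
  have hψlowpd : ∀ k j, pd (fun y => ψlow y j) k I =
      g I k j + ∑ m, christoffel g gInv m k j I * ψlow I m := by
    intro k j
    have h1 := hHess I hI k j
    have hpd2 : pd (fun y => pd S j y) k I = pd2 S k j I := rfl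
    rw [hψlow_eq j, pd_neg, hpd2]
    have h2 : ∑ m, christoffel g gInv m k j I * pd S m I
        = -∑ m, christoffel g gInv m k j I * ψlow I m := by
      rw [← Finset.sum_neg_distrib]
      exact Finset.sum_congr rfl fun m _ => by rw [hψlow I m]; ring
    rw [h2] at h1
    linarith
  -- function forms
  have hψup_eq : ∀ b, (fun y => ψup y b) = (fun y => ∑ j, gInv y b j * ψlow y j) := by
    intro b; funext y; rw [hψup]
  have hψupd : ∀ b, DifferentiableAt ℝ (fun y => ψup y b) I := by
    intro b; rw [hψup_eq b]
    exact DifferentiableAt.fun_sum fun j _ => (hdgi b j).mul (hψlowd j)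
  have hψuppd : ∀ k b, pd (fun y => ψup y b) k I =
      ∑ j, (pd (fun y => gInv y b j) k I * ψlow I j +
        gInv I b j * (g I k j + ∑ m, christoffel g gInv m k j I * ψlow I m)) := by
    intro k b
    rw [hψup_eq b, pd_sum _ _ (fun j _ => (hdgi b j).fun_mul (hψlowd j))]
    exact Finset.sum_congr rfl fun j _ => by rw [pd_mul (hdgi b j) (hψlowd j), hψlowpd k j]
  -- matrix facts
  have hMN : (Matrix.of (g I)) * (Matrix.of (gInv I)) = 1 := by
    ext a b
    simpa [Matrix.mul_apply, Matrix.one_apply] using hgInv I hI a b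
  have hNM : (Matrix.of (gInv I)) * (Matrix.of (g I)) = 1 := mul_eq_one_comm.mp hMN
  have hleft : ∀ a b, ∑ j, gInv I a j * g I j b = if a = b then 1 else 0 := by
    intro a b
    have h1 := congrFun (congrFun hNM a) b
    simpa [Matrix.mul_apply, Matrix.one_apply] using h1
  have hGisym : ∀ a b, gInv I a b = gInv I b a := by
    have hMs : Matrix.transpose (Matrix.of (g I)) = Matrix.of (g I) := by
      ext a b; exact hgsym I hI b a
    have h6 : Matrix.transpose (Matrix.of (gInv I)) * (Matrix.of (g I)) = 1 := by
      nth_rewrite 1 [← hMs]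
      rw [← Matrix.transpose_mul, hMN, Matrix.transpose_one]
    have h7 : Matrix.transpose (Matrix.of (gInv I)) = Matrix.of (gInv I) := by
      calc Matrix.transpose (Matrix.of (gInv I)) = Matrix.transpose (Matrix.of (gInv I)) * ((Matrix.of (g I)) * (Matrix.of (gInv I))) := by
            rw [hMN, Matrix.mul_one]
        _ = (Matrix.transpose (Matrix.of (gInv I)) * (Matrix.of (g I))) * (Matrix.of (gInv I)) := by
            rw [Matrix.mul_assoc]
        _ = Matrix.of (gInv I) := by rw [h6, Matrix.one_mul]
    intro a b
    have h8 := congrFun (congrFun h7 b) a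
    simpa [Matrix.transpose_apply] using h8
  have hdGsym : ∀ (k a b : Fin n),
      pd (fun y => g y a b) k I = pd (fun y => g y b a) k I := by
    intro k a b
    exact pd_congr_nhds (Filter.eventually_of_mem hUI fun y hy => hgsym y hy a b)
  -- contractions
  have c2 : ∀ a, ∑ m, g I a m * ψup I m = ψlow I a := by
    intro a
    have h1 : ∀ m, g I a m * ψup I m = ∑ j, g I a m * gInv I m j * ψlow I j := by
      intro m; rw [hψup, Finset.mul_sum]
      exact Finset.sum_congr rfl fun j _ => by ring
    rw [Finset.sum_congr rfl fun m _ => h1 m, Finset.sum_comm]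
    have h2 : ∀ j, ∑ m, g I a m * gInv I m j * ψlow I j
        = (if a = j then 1 else 0) * ψlow I j := by
      intro j; rw [← Finset.sum_mul, hgInv I hI a j]
    rw [Finset.sum_congr rfl fun j _ => h2 j]
    simp
  have c3 : ∀ k, ∑ j, ψup I j * g I k j = ψlow I k := by
    intro k
    rw [← c2 k]
    exact Finset.sum_congr rfl fun j _ => mul_comm _ _
  have c4 : ∑ a, ψup I a * ψlow I a = ψ I ^ 2 := by
    have hQpos0 : 0 < ∑ a, ψup I a * ψlow I a := Real.sqrt_pos.mp (hψ I ▸ hs)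
    rw [hψ I, Real.sq_sqrt hQpos0.le]
  have c4' : ∑ a, ψlow I a * ψup I a = ψ I ^ 2 := by
    rw [← c4]; exact Finset.sum_congr rfl fun a _ => mul_comm _ _
  -- derivative of inverse metric
  have hdGi : ∀ (k a b : Fin n), pd (fun y => gInv y a b) k I =
      -∑ a', ∑ b', gInv I a a' * pd (fun y => g y a' b') k I * gInv I b' b := by
    intro k a b
    have hkey : ∀ c, ∑ j, (pd (fun y => g y c j) k I * gInv I j b
        + g I c j * pd (fun y => gInv y j b) k I) = 0 := by
      intro c
      have h0 : pd (fun y => ∑ j, g y c j * gInv y j b) k I = 0 :=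
        pd_eventually_const (Filter.eventually_of_mem hUI fun y hy => hgInv y hy c b)
      rw [pd_sum _ _ (fun j _ => (hdg c j).fun_mul (hdgi j b))] at h0
      rw [← h0]
      exact Finset.sum_congr rfl fun j _ => (pd_mul (hdg c j) (hdgi j b)).symm
    have hkey2 : ∀ c, ∑ j, g I c j * pd (fun y => gInv y j b) k I
        = -∑ j, pd (fun y => g y c j) k I * gInv I j b := by
      intro c
      have h1 := hkey c
      rw [Finset.sum_add_distrib] at h1
      linarith
    have h9 : pd (fun y => gInv y a b) k I
        = ∑ c, gInv I a c * (∑ j, g I c j * pd (fun y => gInv y j b) k I) := by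
      have h1 : ∀ c, gInv I a c * (∑ j, g I c j * pd (fun y => gInv y j b) k I)
          = ∑ j, gInv I a c * g I c j * pd (fun y => gInv y j b) k I := by
        intro c; rw [Finset.mul_sum]; exact Finset.sum_congr rfl fun j _ => by ring
      rw [Finset.sum_congr rfl fun c _ => h1 c, Finset.sum_comm]
      have h10 : ∀ j, ∑ c, gInv I a c * g I c j * pd (fun y => gInv y j b) k I
          = (if a = j then 1 else 0) * pd (fun y => gInv y j b) k I := by
        intro j; rw [← Finset.sum_mul, hleft a j]
      rw [Finset.sum_congr rfl fun j _ => h10 j]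
      simp
    rw [h9, Finset.sum_congr rfl fun c _ => by rw [hkey2 c]]
    rw [← Finset.sum_neg_distrib]
    refine Finset.sum_congr rfl fun c _ => ?_
    rw [mul_neg, Finset.mul_sum, neg_inj]
    exact Finset.sum_congr rfl fun j _ => by ring
  -- lowered Christoffel
  have hGammaLow : ∀ (c k j : Fin n), ∑ a, g I c a * christoffel g gInv a k j I =
      (1/2) * (pd (fun y => g y c j) k I + pd (fun y => g y c k) j I
        - pd (fun y => g y k j) c I) := by
    intro c k j
    simp only [christoffel]
    have h1 : ∀ a, g I c a * ((1/2 : ℝ) * ∑ m, gInv I a m *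
        (pd (fun y => g y m j) k I + pd (fun y => g y m k) j I - pd (fun y => g y k j) m I))
        = ∑ m, g I c a * gInv I a m * ((1/2 : ℝ) *
          (pd (fun y => g y m j) k I + pd (fun y => g y m k) j I - pd (fun y => g y k j) m I)) := by
      intro a
      simp only [Finset.mul_sum]
      exact Finset.sum_congr rfl fun m _ => by ring
    rw [Finset.sum_congr rfl fun a _ => h1 a, Finset.sum_comm]
    have h2 : ∀ m, ∑ a, g I c a * gInv I a m * ((1/2 : ℝ) *
        (pd (fun y => g y m j) k I + pd (fun y => g y m k) j I - pd (fun y => g y k j) m I))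
        = (if c = m then 1 else 0) * ((1/2 : ℝ) *
          (pd (fun y => g y m j) k I + pd (fun y => g y m k) j I - pd (fun y => g y k j) m I)) := by
      intro m; rw [← Finset.sum_mul, hgInv I hI c m]
    rw [Finset.sum_congr rfl fun m _ => h2 m]
    simp
  -- Gamma contracted with ψlow
  have c6 : ∀ (k j : Fin n), ∑ m, christoffel g gInv m k j I * ψlow I m =
      ∑ c, ψup I c * ((1/2) * (pd (fun y => g y c j) k I + pd (fun y => g y c k) j I
        - pd (fun y => g y k j) c I)) := by
    intro k j
    have h1 : ∀ m, christoffel g gInv m k j I * ψlow I m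
        = ∑ c, ψup I c * (g I c m * christoffel g gInv m k j I) := by
      intro m
      rw [← c2 m, Finset.mul_sum]
      exact Finset.sum_congr rfl fun c _ => by rw [hgsym I hI m c]; ring
    rw [Finset.sum_congr rfl fun m _ => h1 m, Finset.sum_comm]
    refine Finset.sum_congr rfl fun c _ => ?_
    rw [← hGammaLow c k j, Finset.mul_sum]
  -- dGi contracted once
  have c5' : ∀ (k c : Fin n), ∑ j, pd (fun y => gInv y c j) k I * ψlow I j =
      -∑ a, gInv I c a * ∑ b, pd (fun y => g y a b) k I * ψup I b := by
    intro k c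
    have h1 : ∀ j, pd (fun y => gInv y c j) k I * ψlow I j
        = ∑ a, ∑ b, -(gInv I c a * pd (fun y => g y a b) k I * (gInv I b j * ψlow I j)) := by
      intro j
      rw [hdGi k c j]
      simp only [neg_mul, Finset.sum_mul, ← Finset.sum_neg_distrib]
      exact Finset.sum_congr rfl fun a _ => Finset.sum_congr rfl fun b _ => by ring
    have h2 : ∀ a, gInv I c a * ∑ b, pd (fun y => g y a b) k I * ψup I b
        = ∑ b, ∑ j, gInv I c a * pd (fun y => g y a b) k I * (gInv I b j * ψlow I j) := by
      intro a
      simp only [Finset.mul_sum]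
      refine Finset.sum_congr rfl fun b _ => ?_
      rw [hψup I b]
      simp only [Finset.mul_sum]
      exact Finset.sum_congr rfl fun j _ => by ring
    rw [Finset.sum_congr rfl fun j _ => h1 j, Finset.sum_comm, ← Finset.sum_neg_distrib]
    refine Finset.sum_congr rfl fun a _ => ?_
    rw [h2 a, Finset.sum_comm, ← Finset.sum_neg_distrib]
    exact Finset.sum_congr rfl fun b _ => Finset.sum_neg_distrib _
  -- derivative of Q
  set Q : (Fin n → ℝ) → ℝ := fun y => ∑ a, ψup y a * ψlow y a with hQdef
  have hQd : DifferentiableAt ℝ Q I :=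
    DifferentiableAt.fun_sum fun a _ => (hψupd a).mul (hψlowd a)
  have hQI : Q I = ψ I ^ 2 := c4
  have hQpos : 0 < Q I := by rw [hQI]; positivity
  have hdelta : ∀ (k a : Fin n), ∑ j, gInv I a j * g I k j = if a = k then 1 else 0 := by
    intro k a
    rw [← hleft a k]
    exact Finset.sum_congr rfl fun j _ => by rw [hgsym I hI k j]
  have hPuc : ∀ c, ∑ a, ψlow I a * gInv I a c = ψup I c := by
    intro c
    rw [hψup I c]
    exact Finset.sum_congr rfl fun a _ => by rw [hGisym a c]; ring
  have hψuppd3 : ∀ k b, pd (fun y => ψup y b) k I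
      = (∑ j, pd (fun y => gInv y b j) k I * ψlow I j)
        + (∑ j, gInv I b j * g I k j)
        + ∑ j, gInv I b j * ∑ m, christoffel g gInv m k j I * ψlow I m := by
    intro k b
    rw [hψuppd k b]
    simp only [mul_add, Finset.sum_add_distrib]
    ring
  -- the three pieces of ∑ₐ (∂ψupₐ) ψlowₐ
  have hX : ∀ k, ∑ a, (∑ j, pd (fun y => gInv y a j) k I * ψlow I j) * ψlow I a
      = -∑ c, ψup I c * ∑ b, pd (fun y => g y c b) k I * ψup I b := by
    intro k
    have h1 : ∀ a, (∑ j, pd (fun y => gInv y a j) k I * ψlow I j) * ψlow I a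
        = ∑ c, -(ψlow I a * gInv I a c * ∑ b, pd (fun y => g y c b) k I * ψup I b) := by
      intro a
      rw [c5' k a, neg_mul, Finset.sum_mul, ← Finset.sum_neg_distrib]
      exact Finset.sum_congr rfl fun c _ => by ring
    rw [Finset.sum_congr rfl fun a _ => h1 a, Finset.sum_comm, ← Finset.sum_neg_distrib]
    refine Finset.sum_congr rfl fun c _ => ?_
    rw [Finset.sum_neg_distrib]
    congr 1
    rw [show (∑ a, ψlow I a * gInv I a c * ∑ b, pd (fun y => g y c b) k I * ψup I b)
        = (∑ a, ψlow I a * gInv I a c) * ∑ b, pd (fun y => g y c b) k I * ψup I b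
      from (Finset.sum_mul _ _ _).symm, hPuc c]
  have hYp : ∀ k, ∑ a, (∑ j, gInv I a j * g I k j) * ψlow I a = ψlow I k := by
    intro k
    rw [Finset.sum_congr rfl fun a _ => by rw [hdelta k a]]
    simp
  have hZ : ∀ k, ∑ a, (∑ j, gInv I a j * ∑ m, christoffel g gInv m k j I * ψlow I m) * ψlow I a
      = ∑ j, ψup I j * ∑ c, ψup I c * ((1/2) * (pd (fun y => g y c j) k I
          + pd (fun y => g y c k) j I - pd (fun y => g y k j) c I)) := by
    intro k
    have h1 : ∀ a, (∑ j, gInv I a j * ∑ m, christoffel g gInv m k j I * ψlow I m) * ψlow I a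
        = ∑ j, ψlow I a * gInv I a j * ∑ c, ψup I c * ((1/2) * (pd (fun y => g y c j) k I
            + pd (fun y => g y c k) j I - pd (fun y => g y k j) c I)) := by
      intro a
      rw [Finset.sum_mul]
      exact Finset.sum_congr rfl fun j _ => by rw [c6 k j]; ring
    rw [Finset.sum_congr rfl fun a _ => h1 a, Finset.sum_comm]
    refine Finset.sum_congr rfl fun j _ => ?_
    rw [show (∑ a, ψlow I a * gInv I a j * ∑ c, ψup I c * ((1/2) * (pd (fun y => g y c j) k I
            + pd (fun y => g y c k) j I - pd (fun y => g y k j) c I)))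
        = (∑ a, ψlow I a * gInv I a j) * ∑ c, ψup I c * ((1/2) * (pd (fun y => g y c j) k I
            + pd (fun y => g y c k) j I - pd (fun y => g y k j) c I))
      from (Finset.sum_mul _ _ _).symm, hPuc j]
  -- double-sum symmetry cancellation
  have hcancel : ∀ k, ∑ j, ψup I j * ∑ c, ψup I c * ((1/2) * (pd (fun y => g y c j) k I
          + pd (fun y => g y c k) j I - pd (fun y => g y k j) c I))
      = (1/2) * ∑ c, ψup I c * ∑ b, pd (fun y => g y c b) k I * ψup I b := by
    intro k
    have e1 : ∑ j, ∑ c, ψup I j * ψup I c * pd (fun y => g y c k) j I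
        = ∑ j, ∑ c, ψup I j * ψup I c * pd (fun y => g y k j) c I := by
      rw [Finset.sum_comm]
      refine Finset.sum_congr rfl fun j _ => Finset.sum_congr rfl fun c _ => ?_
      rw [hdGsym c j k]
      ring
    have e2 : ∑ j, ∑ c, ψup I j * ψup I c * pd (fun y => g y c j) k I
        = ∑ c, ψup I c * ∑ b, pd (fun y => g y c b) k I * ψup I b := by
      rw [Finset.sum_comm]
      refine Finset.sum_congr rfl fun c _ => ?_
      rw [Finset.mul_sum]
      exact Finset.sum_congr rfl fun j _ => by ring
    have e3 : ∑ j, ψup I j * ∑ c, ψup I c * ((1/2) * (pd (fun y => g y c j) k I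
          + pd (fun y => g y c k) j I - pd (fun y => g y k j) c I))
        = (1/2) * ((∑ j, ∑ c, ψup I j * ψup I c * pd (fun y => g y c j) k I)
          + ((∑ j, ∑ c, ψup I j * ψup I c * pd (fun y => g y c k) j I)
            - ∑ j, ∑ c, ψup I j * ψup I c * pd (fun y => g y k j) c I)) := by
      conv_rhs => rw [← Finset.sum_sub_distrib, ← Finset.sum_add_distrib, Finset.mul_sum]
      refine Finset.sum_congr rfl fun j _ => ?_
      conv_rhs => rw [← Finset.sum_sub_distrib, ← Finset.sum_add_distrib, Finset.mul_sum]
      rw [Finset.mul_sum]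
      exact Finset.sum_congr rfl fun c _ => by ring
    rw [e3, e1, e2]
    ring
  have hQpd : ∀ k, pd Q k I = 2 * ψlow I k := by
    intro k
    have h0 : pd Q k I = ∑ a, (pd (fun y => ψup y a) k I * ψlow I a
        + ψup I a * pd (fun y => ψlow y a) k I) := by
      rw [hQdef]
      rw [pd_sum _ _ (fun a _ => (hψupd a).fun_mul (hψlowd a))]
      exact Finset.sum_congr rfl fun a _ => pd_mul (hψupd a) (hψlowd a)
    have hB : ∑ a, ψup I a * pd (fun y => ψlow y a) k I
        = ψlow I k + ∑ j, ψup I j * ∑ c, ψup I c * ((1/2) * (pd (fun y => g y c j) k I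
            + pd (fun y => g y c k) j I - pd (fun y => g y k j) c I)) := by
      have h1 : ∀ a, ψup I a * pd (fun y => ψlow y a) k I
          = ψup I a * g I k a + ψup I a * ∑ c, ψup I c * ((1/2) * (pd (fun y => g y c a) k I
              + pd (fun y => g y c k) a I - pd (fun y => g y k a) c I)) := by
        intro a
        rw [hψlowpd k a, c6 k a]
        ring
      rw [Finset.sum_congr rfl fun a _ => h1 a, Finset.sum_add_distrib, c3 k]
    have hA : ∑ a, pd (fun y => ψup y a) k I * ψlow I a
        = (-∑ c, ψup I c * ∑ b, pd (fun y => g y c b) k I * ψup I b) + ψlow I k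
          + ∑ j, ψup I j * ∑ c, ψup I c * ((1/2) * (pd (fun y => g y c j) k I
              + pd (fun y => g y c k) j I - pd (fun y => g y k j) c I)) := by
      have h1 : ∀ a, pd (fun y => ψup y a) k I * ψlow I a
          = (∑ j, pd (fun y => gInv y a j) k I * ψlow I j) * ψlow I a
            + (∑ j, gInv I a j * g I k j) * ψlow I a
            + (∑ j, gInv I a j * ∑ m, christoffel g gInv m k j I * ψlow I m) * ψlow I a := by
        intro a
        rw [hψuppd3 k a]
        ring
      rw [Finset.sum_congr rfl fun a _ => h1 a, Finset.sum_add_distrib, Finset.sum_add_distrib,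
        hX k, hYp k, hZ k]
    rw [h0, Finset.sum_add_distrib, hA, hB, hcancel k]
    ring
  -- derivative of ψ
  have hψ_eq : ψ = fun y => Real.sqrt (Q y) := by
    funext y; rw [hψ]
  have hψd : DifferentiableAt ℝ ψ I := by
    rw [hψ_eq]
    exact ((Real.hasDerivAt_sqrt (ne_of_gt hQpos)).comp_hasFDerivAt I
      hQd.hasFDerivAt).differentiableAt
  have hψpd : ∀ k, pd ψ k I = ψlow I k / ψ I := by
    intro k
    have h3 : Real.sqrt (Q I) = ψ I := (hψ I).symm
    have h4 : pd ψ k I = pd (fun y => Real.sqrt (Q y)) k I := by rw [← hψ_eq]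
    rw [h4, pd_sqrt hQd hQpos, hQpd k, h3]
    rw [mul_div_mul_left _ _ (two_ne_zero)]
  -- derivative of υ
  have hυ_eq : (fun y => υ y i) = fun y => ψup y i / ψ y := by
    funext y; rw [hυ]
  have hυpd : ∀ k, pd (fun y => υ y i) k I =
      pd (fun y => ψup y i) k I / ψ I - ψup I i * ψlow I k / ψ I ^ 3 := by
    intro k
    rw [hυ_eq, pd_div (hψupd i) hψd (ne_of_gt hs), hψpd k]
    field_simp
  -- final computation
  have hsne : ψ I ≠ 0 := ne_of_gt hs
  have hLL : ∀ (a k b : Fin n),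
      (1/2) * (pd (fun y => g y b a) k I + pd (fun y => g y b k) a I - pd (fun y => g y k a) b I)
      + (1/2) * (pd (fun y => g y a b) k I + pd (fun y => g y a k) b I - pd (fun y => g y k b) a I)
      = pd (fun y => g y a b) k I := by
    intro a k b
    have e1 := hdGsym k b a
    have e2 := hdGsym a b k
    have e3 := hdGsym b a k
    linarith
  have hX2 : ∑ k, ψup I k * ∑ j, pd (fun y => gInv y i j) k I * ψlow I j
      = -∑ k, ∑ a, ∑ b, ψup I k * ψup I b * (gInv I i a * pd (fun y => g y a b) k I) := by
    rw [← Finset.sum_neg_distrib]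
    refine Finset.sum_congr rfl fun k _ => ?_
    rw [c5' k i, mul_neg, neg_inj]
    simp only [Finset.mul_sum]
    exact Finset.sum_congr rfl fun a _ => Finset.sum_congr rfl fun b _ => by ring
  have hY2 : ∑ k, ψup I k * ∑ j, gInv I i j * g I k j = ψup I i := by
    rw [Finset.sum_congr rfl fun k _ => by rw [hdelta k i]]
    simp
  have hZ2 : ∑ k, ψup I k * ∑ j, gInv I i j * ∑ m, christoffel g gInv m k j I * ψlow I m
      = ∑ k, ∑ a, ∑ b, ψup I k * ψup I b * (gInv I i a *
          ((1/2) * (pd (fun y => g y b a) k I + pd (fun y => g y b k) a I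
            - pd (fun y => g y k a) b I))) := by
    refine Finset.sum_congr rfl fun k _ => ?_
    rw [show (∑ j, gInv I i j * ∑ m, christoffel g gInv m k j I * ψlow I m)
        = ∑ a, gInv I i a * ∑ b, ψup I b * ((1/2) * (pd (fun y => g y b a) k I
            + pd (fun y => g y b k) a I - pd (fun y => g y k a) b I))
      from Finset.sum_congr rfl fun a _ => by rw [c6 k a]]
    simp only [Finset.mul_sum]
    exact Finset.sum_congr rfl fun a _ => Finset.sum_congr rfl fun b _ => by ring
  have hT3 : ∑ k, ∑ m, ψup I k * (christoffel g gInv i k m I * ψup I m)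
      = ∑ k, ∑ a, ∑ b, ψup I k * ψup I b * (gInv I i a *
          ((1/2) * (pd (fun y => g y a b) k I + pd (fun y => g y a k) b I
            - pd (fun y => g y k b) a I))) := by
    refine Finset.sum_congr rfl fun k _ => ?_
    simp only [christoffel]
    rw [Finset.sum_comm]
    refine Finset.sum_congr rfl fun a _ => ?_
    simp only [Finset.mul_sum, Finset.sum_mul]
    exact Finset.sum_congr rfl fun m _ => by ring
  have key : (∑ k, ψup I k * pd (fun y => ψup y i) k I)
      + ∑ k, ∑ m, ψup I k * (christoffel g gInv i k m I * ψup I m) = ψup I i := by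
    have hsplit : ∑ k, ψup I k * pd (fun y => ψup y i) k I
        = (∑ k, ψup I k * ∑ j, pd (fun y => gInv y i j) k I * ψlow I j)
          + (∑ k, ψup I k * ∑ j, gInv I i j * g I k j)
          + ∑ k, ψup I k * ∑ j, gInv I i j * ∑ m, christoffel g gInv m k j I * ψlow I m := by
      rw [← Finset.sum_add_distrib, ← Finset.sum_add_distrib]
      exact Finset.sum_congr rfl fun k _ => by rw [hψuppd3 k i]; ring
    have hcomb : (∑ k, ∑ a, ∑ b, ψup I k * ψup I b * (gInv I i a *
          ((1/2) * (pd (fun y => g y b a) k I + pd (fun y => g y b k) a I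
            - pd (fun y => g y k a) b I))))
        + (∑ k, ∑ a, ∑ b, ψup I k * ψup I b * (gInv I i a *
          ((1/2) * (pd (fun y => g y a b) k I + pd (fun y => g y a k) b I
            - pd (fun y => g y k b) a I))))
        = ∑ k, ∑ a, ∑ b, ψup I k * ψup I b * (gInv I i a * pd (fun y => g y a b) k I) := by
      rw [← Finset.sum_add_distrib]
      refine Finset.sum_congr rfl fun k _ => ?_
      rw [← Finset.sum_add_distrib]
      refine Finset.sum_congr rfl fun a _ => ?_
      rw [← Finset.sum_add_distrib]
      refine Finset.sum_congr rfl fun b _ => ?_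
      linear_combination (ψup I k * ψup I b * gInv I i a) * hLL a k b
    rw [hsplit, hX2, hY2, hZ2, hT3]
    linarith [hcomb]
  have hexp : ∀ k, υ I k * (pd (fun y => υ y i) k I + ∑ m, christoffel g gInv i k m I * υ I m)
      = (ψup I k * pd (fun y => ψup y i) k I
          + ∑ m, ψup I k * (christoffel g gInv i k m I * ψup I m)) / ψ I ^ 2
        - ψup I i * (ψup I k * ψlow I k) / ψ I ^ 4 := by
    intro k
    rw [hυ I k, hυpd k]
    have hm : ∑ m, christoffel g gInv i k m I * υ I m
        = (∑ m, christoffel g gInv i k m I * ψup I m) / ψ I := by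
      rw [Finset.sum_div]
      exact Finset.sum_congr rfl fun m _ => by rw [hυ I m]; ring
    rw [hm, ← Finset.mul_sum]
    field_simp
    ring
  rw [Finset.sum_congr rfl fun k _ => hexp k]
  rw [Finset.sum_sub_distrib, ← Finset.sum_div, Finset.sum_add_distrib, key]
  rw [← Finset.sum_div, ← Finset.mul_sum, c4]
  field_simp
  ring


end
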